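/- arXiv:0803.2759 — 3 statements merged into one kernel-verified Lean document; each statement's English description precedes it below -/
import Mathlib

section
/- In the triangular grid, if a relative address (a,b,c) has at least one component equal to zero and the two other components do not have the same sign (i.e., their product is ≤ 0), then the corresponding path of |a| + |b| + |c| unit steps is a shortest path; conversely, any address of shortest path form satisfies these conditions. -/
/-- The triangular grid on `ℤ²`: each vertex is adjacent to its six neighbours
obtained by adding `±i, ±j, ±k`, where `i = (1,0)`, `j = (0,1)`, `k = (-1,-1)`. -/
def triGraph : SimpleGraph (ℤ × ℤ) where
  Adj u v := (u.1 - v.1 = 1 ∧ u.2 - v.2 = 0) ∨ (u.1 - v.1 = -1 ∧ u.2 - v.2 = 0) ∨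
    (u.1 - v.1 = 0 ∧ u.2 - v.2 = 1) ∨ (u.1 - v.1 = 0 ∧ u.2 - v.2 = -1) ∨
    (u.1 - v.1 = 1 ∧ u.2 - v.2 = 1) ∨ (u.1 - v.1 = -1 ∧ u.2 - v.2 = -1)
  symm := by constructor; intro u v h; omega
  loopless := by constructor; intro v h; omega

/-- The vector denoted by the address `(a,b,c)`, i.e. `a·i + b·j + c·k`. -/
def triVec (a b c : ℤ) : ℤ × ℤ := a • ((1 : ℤ), (0 : ℤ)) + b • ((0 : ℤ), (1 : ℤ)) + c • ((-1 : ℤ), (-1 : ℤ))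

/-!
The graph distance from `0` to `(x, y)` is the hexagonal norm `max |x| |y| |x - y|`: a single
step changes this norm by at most one, and from every nonzero point some step decreases it.
The address `(a, b, c)` denotes the point `(a - c, b - c)`, whose norm
`max |a - c| |b - c| |a - b|` equals `|a| + |b| + |c|` exactly under the stated sign conditions.
-/

namespace SimpleGraph

variable {V : Type*} {G : SimpleGraph V} {f : V → ℕ}

theorem Walk.apply_le_apply_add_length (hf : ∀ v w, G.Adj v w → f w ≤ f v + 1)
    {u v : V} (p : G.Walk u v) : f v ≤ f u + p.length := by
  induction p with
  | nil => simp
  | cons hadj _ ih =>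
    rw [Walk.length_cons]
    have := hf _ _ hadj
    omega

theorem exists_walk_length_eq_of_descent {u : V} (hzero : ∀ v, f v = 0 → v = u)
    (hdescent : ∀ v, f v ≠ 0 → ∃ w, G.Adj w v ∧ f w + 1 = f v) (v : V) :
    ∃ p : G.Walk u v, p.length = f v := by
  induction hn : f v generalizing v with
  | zero => obtain rfl := hzero v hn; exact ⟨.nil, rfl⟩
  | succ n ih =>
    obtain ⟨w, hadj, hw⟩ := hdescent v (by omega)
    obtain ⟨p, hp⟩ := ih w (by omega)
    exact ⟨p.concat hadj, by simp [hp]⟩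

theorem dist_eq_of_descent {u : V} (hf : ∀ v w, G.Adj v w → f w ≤ f v + 1)
    (hzero : ∀ v, f v = 0 ↔ v = u) (hdescent : ∀ v, f v ≠ 0 → ∃ w, G.Adj w v ∧ f w + 1 = f v)
    (v : V) : G.dist u v = f v := by
  obtain ⟨p, hp⟩ := exists_walk_length_eq_of_descent (fun v => (hzero v).1) hdescent v
  refine le_antisymm (hp ▸ dist_le p) ?_
  obtain ⟨q, hq⟩ := p.reachable.exists_walk_length_eq_dist
  simpa [(hzero u).2 rfl, hq] using q.apply_le_apply_add_length hf

end SimpleGraph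

def triNorm (p : ℤ × ℤ) : ℕ := max (max p.1.natAbs p.2.natAbs) (p.1 - p.2).natAbs

theorem triNorm_le_of_adj {v w : ℤ × ℤ} (h : triGraph.Adj v w) : triNorm w ≤ triNorm v + 1 := by
  simp only [triGraph, triNorm] at h ⊢
  omega

theorem triNorm_eq_zero_iff (p : ℤ × ℤ) : triNorm p = 0 ↔ p = 0 := by
  simp only [triNorm, Prod.ext_iff, Prod.fst_zero, Prod.snd_zero]
  omega

theorem exists_triGraph_adj_triNorm_add_one (p : ℤ × ℤ) (hp : triNorm p ≠ 0) :
    ∃ q, triGraph.Adj q p ∧ triNorm q + 1 = triNorm p := by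
  obtain ⟨x, y⟩ := p
  simp only [triNorm] at hp ⊢
  have : (0 < x ∧ 0 < y) ∨ (0 < x ∧ y ≤ 0) ∨ (x ≤ 0 ∧ 0 < y) ∨ (x < 0 ∧ y < 0) ∨
      (x = 0 ∧ y < 0) ∨ (x < 0 ∧ y = 0) := by omega
  rcases this with h | h | h | h | h | h
  · exact ⟨(x - 1, y - 1), by simp only [triGraph]; omega, by omega⟩
  · exact ⟨(x - 1, y), by simp only [triGraph]; omega, by omega⟩
  · exact ⟨(x, y - 1), by simp only [triGraph]; omega, by omega⟩
  · exact ⟨(x + 1, y + 1), by simp only [triGraph]; omega, by omega⟩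
  · exact ⟨(x, y + 1), by simp only [triGraph]; omega, by omega⟩
  · exact ⟨(x + 1, y), by simp only [triGraph]; omega, by omega⟩

theorem triGraph_dist_zero (p : ℤ × ℤ) : triGraph.dist 0 p = triNorm p :=
  SimpleGraph.dist_eq_of_descent (fun _ _ => triNorm_le_of_adj) triNorm_eq_zero_iff
    exists_triGraph_adj_triNorm_add_one p

theorem triVec_eq (a b c : ℤ) : triVec a b c = (a - c, b - c) := by
  ext <;> simp [triVec] <;> ring

/-- An address `(a,b,c)` is of shortest path form (the corresponding path of
`|a| + |b| + |c|` unit steps is a shortest path) if and only if at least one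
component is zero and the two other components do not have the same sign. -/
theorem triVec_shortest_form_iff (a b c : ℤ) :
    triGraph.dist 0 (triVec a b c) = (|a| + |b| + |c|).toNat ↔
      ((a = 0 ∧ b * c ≤ 0) ∨ (b = 0 ∧ a * c ≤ 0) ∨ (c = 0 ∧ a * b ≤ 0)) := by
  rw [triVec_eq, triGraph_dist_zero]
  simp only [triNorm, mul_nonpos_iff, Int.abs_eq_natAbs]
  omega
end

section
/- Every vector in the triangular grid has a unique representation (a,b,c) in shortest path form, that is, with at least one component zero and the other two components not both strictly positive nor both strictly negative. -/
/-- `(a,b,c)` is a shortest path form: at least one component is zero, and the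
other two components are not both strictly positive nor both strictly negative. -/
def ShortestPathForm (a b c : ℤ) : Prop :=
  (a = 0 ∧ ¬(0 < b ∧ 0 < c) ∧ ¬(b < 0 ∧ c < 0)) ∨
  (b = 0 ∧ ¬(0 < a ∧ 0 < c) ∧ ¬(a < 0 ∧ c < 0)) ∨
  (c = 0 ∧ ¬(0 < a ∧ 0 < b) ∧ ¬(a < 0 ∧ b < 0))

def median3 {α : Type*} [LinearOrder α] (a b c : α) : α :=
  max (min a b) (min (max a b) c)

theorem median3_add_right {α : Type*} [AddCommGroup α] [LinearOrder α] [IsOrderedAddMonoid α]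
    (a b c t : α) : median3 (a + t) (b + t) (c + t) = median3 a b c + t := by
  simp only [median3, min_add_add_right, max_add_add_right]

theorem shortestPathForm_iff_median3_eq_zero (a b c : ℤ) :
    ShortestPathForm a b c ↔ median3 a b c = 0 := by
  unfold ShortestPathForm median3
  omega

theorem shortestPathForm_add_iff (a b c t : ℤ) :
    ShortestPathForm (a + t) (b + t) (c + t) ↔ t = -median3 a b c := by
  rw [shortestPathForm_iff_median3_eq_zero, median3_add_right]
  omega

/-- Every vector of the triangular grid has a unique representation `(a,b,c)`
in shortest path form. -/
theorem unique_shortest_path_form (v : ℤ × ℤ) :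
    ∃! t : ℤ × ℤ × ℤ, triVec t.1 t.2.1 t.2.2 = v ∧ ShortestPathForm t.1 t.2.1 t.2.2 := by
  obtain ⟨x, y⟩ := v
  set m := median3 x y 0
  refine ⟨(x + -m, y + -m, 0 + -m), ⟨by simp [triVec_eq], (shortestPathForm_add_iff x y 0 _).2 rfl⟩, ?_⟩
  rintro ⟨a, b, c⟩ ⟨hv, hspf⟩
  obtain ⟨rfl, rfl⟩ : a = x + c ∧ b = y + c := by
    simp only [triVec_eq, Prod.mk.injEq] at hv
    omega
  obtain rfl : c = -m := (shortestPathForm_add_iff x y 0 c).1 (by rwa [zero_add])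
  simp
end

section
/- In the half-plane triangular grid S generated by nonnegative combinations of i and j, let d = ⌊(ℓ_max+1)/√(c+1)⌋, let R be the d×d square of vertices {v + αi + βj : 0 ≤ α, β < d}, and let D = {v + αi + βj : 0 ≤ α, β < d + ℓ_max} \ R. Then for every nonempty rectangle R' = {v + αi + βj : 0 ≤ α < a, 0 ≤ β < b} with 1 ≤ a, b ≤ d, the number of vertices of D within graph distance ℓ_max of R' is at least c·|R'| = c·a·b. -/
/-- The half-plane (quadrant) triangular grid `S` generated from `v` by nonnegative
combinations of `i = (1,0)` and `j = (0,1)`: the triangular grid restricted to the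
vertices `v + αi + βj` with `α, β ≥ 0` (paths must stay within the quadrant). -/
def quadGraph (v : ℤ × ℤ) : SimpleGraph (ℤ × ℤ) where
  Adj u w := ((u.1 - w.1 = 1 ∧ u.2 - w.2 = 0) ∨ (u.1 - w.1 = -1 ∧ u.2 - w.2 = 0) ∨
    (u.1 - w.1 = 0 ∧ u.2 - w.2 = 1) ∨ (u.1 - w.1 = 0 ∧ u.2 - w.2 = -1) ∨
    (u.1 - w.1 = 1 ∧ u.2 - w.2 = 1) ∨ (u.1 - w.1 = -1 ∧ u.2 - w.2 = -1)) ∧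
    v.1 ≤ u.1 ∧ v.2 ≤ u.2 ∧ v.1 ≤ w.1 ∧ v.2 ≤ w.2
  symm := ⟨by intro u w h; omega⟩
  loopless := ⟨by intro u h; omega⟩

/-- The rectangle `{v + αi + βj : 0 ≤ α < a, 0 ≤ β < b}`. -/
def rect (v : ℤ × ℤ) (a b : ℕ) : Set (ℤ × ℤ) :=
  {p | v.1 ≤ p.1 ∧ p.1 < v.1 + a ∧ v.2 ≤ p.2 ∧ p.2 < v.2 + b}

/-!
Every vertex of the `(a + ℓ_max) × (b + ℓ_max)` rectangle at the corner `v` lies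
within distance `ℓ_max` of `R'`, since diagonal steps `i + j` make the distance from the nearest
point of `R'` the larger of the two coordinate gaps. Removing `R` leaves at least
`(a + ℓ_max)(b + ℓ_max) - d² ≥ (ℓ_max + 1)² - d²` such vertices in `D`, and the choice of `d`
gives `(ℓ_max + 1)² ≥ (c + 1) d² ≥ c a b + d²`. -/

namespace quadGraph

theorem exists_walk_length_le {v : ℤ × ℤ} (n : ℕ) {p q : ℤ × ℤ} (hvp₁ : v.1 ≤ p.1)
    (hvp₂ : v.2 ≤ p.2) (hpq₁ : p.1 ≤ q.1) (hpq₂ : p.2 ≤ q.2) (hn₁ : q.1 - p.1 ≤ n)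
    (hn₂ : q.2 - p.2 ≤ n) : ∃ w : (quadGraph v).Walk p q, w.length ≤ n := by
  induction n generalizing p with
  | zero =>
    obtain rfl : p = q := Prod.ext (by omega) (by omega)
    exact ⟨.nil, le_rfl⟩
  | succ n ih =>
    by_cases hpq : p = q
    · subst hpq
      exact ⟨.nil, Nat.zero_le _⟩
    have hne : p.1 ≠ q.1 ∨ p.2 ≠ q.2 := by
      by_contra! h
      exact hpq (Prod.ext h.1 h.2)
    obtain ⟨p', hp'₁, hp'₂⟩ :
        ∃ p' : ℤ × ℤ, p'.1 = min (p.1 + 1) q.1 ∧ p'.2 = min (p.2 + 1) q.2 :=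
      ⟨(min (p.1 + 1) q.1, min (p.2 + 1) q.2), rfl, rfl⟩
    have hstep : (quadGraph v).Adj p p' := ⟨by omega, by omega, by omega, by omega, by omega⟩
    obtain ⟨w, hw⟩ := ih (p := p') (by omega) (by omega) (by omega) (by omega) (by omega)
      (by omega)
    exact ⟨.cons hstep w, by simp only [SimpleGraph.Walk.length_cons]; omega⟩

theorem exists_mem_rect_dist_le {v u : ℤ × ℤ} {a b : ℕ} (n : ℕ) (ha : 1 ≤ a) (hb : 1 ≤ b)
    (hu : u ∈ rect v (a + n) (b + n)) : ∃ w ∈ rect v a b, (quadGraph v).dist w u ≤ n := by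
  obtain ⟨hu₁, hu₁', hu₂, hu₂'⟩ := hu
  push_cast at hu₁' hu₂'
  obtain ⟨w, hw₁, hw₂⟩ :
      ∃ w : ℤ × ℤ, w.1 = min u.1 (v.1 + a - 1) ∧ w.2 = min u.2 (v.2 + b - 1) :=
    ⟨(min u.1 (v.1 + a - 1), min u.2 (v.2 + b - 1)), rfl, rfl⟩
  have hw : w ∈ rect v a b := ⟨by omega, by omega, by omega, by omega⟩
  obtain ⟨walk, hwalk⟩ := exists_walk_length_le (v := v) n (p := w) (q := u) (by omega)
    (by omega) (by omega) (by omega) (by omega) (by omega)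
  exact ⟨w, hw, (SimpleGraph.dist_le walk).trans hwalk⟩

end quadGraph

namespace rect

theorem eq_coe_product (v : ℤ × ℤ) (a b : ℕ) :
    rect v a b = ↑(Finset.Ico v.1 (v.1 + a) ×ˢ Finset.Ico v.2 (v.2 + b)) := by
  ext p
  simp [rect, and_assoc]

theorem finite (v : ℤ × ℤ) (a b : ℕ) : (rect v a b).Finite := by
  rw [eq_coe_product]
  exact Finset.finite_toSet _

theorem ncard_eq (v : ℤ × ℤ) (a b : ℕ) : (rect v a b).ncard = a * b := by
  rw [eq_coe_product, Set.ncard_coe_finset, Finset.card_product, Int.card_Ico, Int.card_Ico]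
  simp

theorem mono {v : ℤ × ℤ} {a b a' b' : ℕ} (ha : a ≤ a') (hb : b ≤ b') :
    rect v a b ⊆ rect v a' b' := by
  rintro p ⟨h₁, h₁', h₂, h₂'⟩
  exact ⟨h₁, by omega, h₂, by omega⟩

end rect

theorem mul_floor_div_sqrt_sq_le {x y : ℝ} (hx : 0 ≤ x) (hy : 0 ≤ y) :
    y * (⌊x / √y⌋₊ : ℝ) ^ 2 ≤ x ^ 2 := by
  rcases hy.eq_or_lt with rfl | hy
  · simp [sq_nonneg]
  have hsqrt : 0 < √y := Real.sqrt_pos.mpr hy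
  have hfloor : (⌊x / √y⌋₊ : ℝ) * √y ≤ x :=
    (le_div_iff₀ hsqrt).mp (Nat.floor_le (div_nonneg hx hsqrt.le))
  calc y * (⌊x / √y⌋₊ : ℝ) ^ 2 = ((⌊x / √y⌋₊ : ℝ) * √y) ^ 2 := by
        rw [mul_pow, Real.sq_sqrt hy.le, mul_comm]
    _ ≤ x ^ 2 := pow_le_pow_left₀ (by positivity) hfloor 2

theorem quadrant_expansion_general (c lmax : ℕ)
    (d : ℕ) (hd : d = ⌊((lmax : ℝ) + 1) / Real.sqrt ((c : ℝ) + 1)⌋₊)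
    (v : ℤ × ℤ) (a b : ℕ) (ha1 : 1 ≤ a) (had : a ≤ d) (hb1 : 1 ≤ b) (hbd : b ≤ d) :
    c * a * b ≤
      ({u | u ∈ rect v (d + lmax) (d + lmax) \ rect v d d ∧
        ∃ w ∈ rect v a b, (quadGraph v).dist w u ≤ lmax}).ncard := by
  have hkey : (c + 1) * d ^ 2 ≤ (lmax + 1) ^ 2 := by
    have := mul_floor_div_sqrt_sq_le (x := (lmax : ℝ) + 1) (y := (c : ℝ) + 1)
      (by positivity) (by positivity)
    rw [← hd] at this
    exact_mod_cast this
  have hcount : c * a * b + d * d ≤ (a + lmax) * (b + lmax) := by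
    nlinarith [Nat.mul_le_mul had hbd, Nat.mul_le_mul ha1 hb1]
  have hsub : rect v (a + lmax) (b + lmax) \ rect v d d ⊆
      {u | u ∈ rect v (d + lmax) (d + lmax) \ rect v d d ∧
        ∃ w ∈ rect v a b, (quadGraph v).dist w u ≤ lmax} := fun u hu =>
    ⟨⟨rect.mono (by omega) (by omega) hu.1, hu.2⟩,
      quadGraph.exists_mem_rect_dist_le lmax ha1 hb1 hu.1⟩
  calc c * a * b ≤ (rect v (a + lmax) (b + lmax)).ncard - (rect v d d).ncard := by
        rw [rect.ncard_eq, rect.ncard_eq]; omega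
    _ ≤ (rect v (a + lmax) (b + lmax) \ rect v d d).ncard :=
        Set.le_ncard_sdiff _ _ (rect.finite v d d)
    _ ≤ _ := Set.ncard_le_ncard hsub ((rect.finite v _ _).subset fun u hu => hu.1.1)

/-- Expansion in the quadrant: with `d = ⌊(ℓ_max+1)/√(c+1)⌋`, `R = rect v d d` and
`D = rect v (d+ℓ_max) (d+ℓ_max) \ R`, every rectangle `R' = rect v a b` with
`1 ≤ a, b ≤ d` has at least `c·a·b` vertices of `D` within graph distance `ℓ_max`
of it (distance in the quadrant graph). -/
theorem quadrant_expansion (c lmax : ℕ) (hc : 0 < c) (hlmax : 0 < lmax)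
    (d : ℕ) (hd : d = ⌊((lmax : ℝ) + 1) / Real.sqrt ((c : ℝ) + 1)⌋₊)
    (v : ℤ × ℤ) (a b : ℕ) (ha1 : 1 ≤ a) (had : a ≤ d) (hb1 : 1 ≤ b) (hbd : b ≤ d) :
    c * a * b ≤
      ({u | u ∈ rect v (d + lmax) (d + lmax) \ rect v d d ∧
        ∃ w ∈ rect v a b, (quadGraph v).dist w u ≤ lmax}).ncard :=
  quadrant_expansion_general c lmax d hd v a b ha1 had hb1 hbd
end
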